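/- Let (X,𝔅,μ,T) be an invertible measure-preserving system (T a bimeasurable bijection with T and T⁻¹ measure-preserving) and α a finite measurable partition of X. Then D̄_μ(T,α) = D̄_μ(T⁻¹,α). Consequently D̄_μ(X,T) = D̄_μ(X,T⁻¹). -/

import Mathlib

open MeasureTheory Filter Set
open scoped ENNReal symmDiff

noncomputable section

namespace EntDim

/-- An increasing sequence of positive integers `S = {s 0 < s 1 < ⋯}` (0-indexed,
so `s n` is the `(n+1)`-st element of `S`). -/
def IsPosSeq (s : ℕ → ℕ) : Prop := StrictMono s ∧ 0 < s 0

/-- `D̄(S,τ) = limsup_n n / (s_n)^τ` (with the convention that the `n`-th term,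
for `n` starting at `0`, is `(n+1)/(s n)^τ`, matching the 1-indexed definition). -/
def dimExprSup (s : ℕ → ℕ) (τ : ℝ) : ℝ≥0∞ :=
  Filter.atTop.limsup fun n : ℕ => ((n : ℝ≥0∞) + 1) / (s n : ℝ≥0∞) ^ τ

/-- `D̲(S,τ) = liminf_n n / (s_n)^τ`. -/
def dimExprInf (s : ℕ → ℕ) (τ : ℝ) : ℝ≥0∞ :=
  Filter.atTop.liminf fun n : ℕ => ((n : ℝ≥0∞) + 1) / (s n : ℝ≥0∞) ^ τ

/-- The upper dimension `D̄(S) = inf {τ ≥ 0 | D̄(S,τ) = 0}` of a sequence. -/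
def upperDim (s : ℕ → ℕ) : ℝ := sInf {τ : ℝ | 0 ≤ τ ∧ dimExprSup s τ = 0}

/-- The lower dimension `D̲(S) = inf {τ ≥ 0 | D̲(S,τ) = 0}` of a sequence. -/
def lowerDim (s : ℕ → ℕ) : ℝ := sInf {τ : ℝ | 0 ≤ τ ∧ dimExprInf s τ = 0}

variable {X : Type*} [MeasurableSpace X]

/-- `P : ι → Set X` is a finite measurable partition of `X`. -/
def IsPartition {ι : Type*} [Fintype ι] (P : ι → Set X) : Prop :=
  (∀ i, MeasurableSet (P i)) ∧ Pairwise (Function.onFun Disjoint P) ∧ (⋃ i, P i) = Set.univ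

/-- The entropy `H_μ(⋁_{i ∈ F} T^{-f i} P)` of the join of the preimage partitions
`T^{-f i} P` over a finite index set `F`. -/
def finJoinEnt (μ : Measure X) (T : X → X) {ι : Type*} [Fintype ι] (P : ι → Set X)
    (f : ℕ → ℕ) (F : Finset ℕ) : ℝ :=
  ∑ ω : F → ι, Real.negMulLog (μ (⋂ i : F, T^[f i.1] ⁻¹' (P (ω i)))).toReal

/-- `H_μ(⋁_{i=1}^{n} T^{-s_i} P)` (with `s` 0-indexed: this is the join over the
first `n` elements of the sequence). -/
def seqJoinEnt (μ : Measure X) (T : X → X) {ι : Type*} [Fintype ι] (P : ι → Set X)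
    (s : ℕ → ℕ) (n : ℕ) : ℝ :=
  finJoinEnt μ T P s (Finset.range n)

/-- `S` is an entropy generating sequence of the partition `P`:
`liminf_n (1/n) H_μ(⋁_{i=1}^n T^{-s_i} P) > 0`. -/
def IsEntGenSeq (μ : Measure X) (T : X → X) {ι : Type*} [Fintype ι] (P : ι → Set X)
    (s : ℕ → ℕ) : Prop :=
  IsPosSeq s ∧ 0 < Filter.atTop.liminf fun n : ℕ => seqJoinEnt μ T P s n / n

/-- `S` is a positive entropy sequence of the partition `P`:
`limsup_n (1/n) H_μ(⋁_{i=1}^n T^{-s_i} P) > 0`. -/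
def IsPosEntSeq (μ : Measure X) (T : X → X) {ι : Type*} [Fintype ι] (P : ι → Set X)
    (s : ℕ → ℕ) : Prop :=
  IsPosSeq s ∧ 0 < Filter.atTop.limsup fun n : ℕ => seqJoinEnt μ T P s n / n

/-- `D̄^e_μ(T,P)`: the supremum of upper dimensions over entropy generating sequences
of `P` (`0`, by convention `sSup ∅ = 0`, if there are none). This is the upper
entropy dimension `D̄_μ(T,P)` of the partition `P`. -/
def upperEntDimPart (μ : Measure X) (T : X → X) {ι : Type*} [Fintype ι]
    (P : ι → Set X) : ℝ :=
  sSup {d : ℝ | ∃ s : ℕ → ℕ, IsEntGenSeq μ T P s ∧ d = upperDim s}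

/-- `D̲^e_μ(T,P)`: the supremum of lower dimensions over entropy generating sequences,
i.e. the lower entropy dimension `D̲_μ(T,P)` of the partition `P`. -/
def lowerEntDimPart (μ : Measure X) (T : X → X) {ι : Type*} [Fintype ι]
    (P : ι → Set X) : ℝ :=
  sSup {d : ℝ | ∃ s : ℕ → ℕ, IsEntGenSeq μ T P s ∧ d = lowerDim s}

/-- `D̄^p_μ(T,P)`: the supremum of upper dimensions over positive entropy sequences of `P`. -/
def upperPosDimPart (μ : Measure X) (T : X → X) {ι : Type*} [Fintype ι]
    (P : ι → Set X) : ℝ :=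
  sSup {d : ℝ | ∃ s : ℕ → ℕ, IsPosEntSeq μ T P s ∧ d = upperDim s}

/-- `D̲^p_μ(T,P)`: the supremum of lower dimensions over positive entropy sequences of `P`. -/
def lowerPosDimPart (μ : Measure X) (T : X → X) {ι : Type*} [Fintype ι]
    (P : ι → Set X) : ℝ :=
  sSup {d : ℝ | ∃ s : ℕ → ℕ, IsPosEntSeq μ T P s ∧ d = lowerDim s}

/-- The upper metric entropy dimension `D̄_μ(X,T)`: the supremum of `D̄_μ(T,P)`
over all finite measurable partitions `P` of `X`. -/
def upperEntDim (μ : Measure X) (T : X → X) : ℝ :=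
  sSup {d : ℝ | ∃ (k : ℕ) (P : Fin k → Set X), IsPartition P ∧ d = upperEntDimPart μ T P}

/-- The lower metric entropy dimension `D̲_μ(X,T)`. -/
def lowerEntDim (μ : Measure X) (T : X → X) : ℝ :=
  sSup {d : ℝ | ∃ (k : ℕ) (P : Fin k → Set X), IsPartition P ∧ d = lowerEntDimPart μ T P}

/-- `D̄^p_μ(X,T)`: the supremum of `D̄^p_μ(T,P)` over all finite measurable partitions. -/
def upperPosDim (μ : Measure X) (T : X → X) : ℝ :=
  sSup {d : ℝ | ∃ (k : ℕ) (P : Fin k → Set X), IsPartition P ∧ d = upperPosDimPart μ T P}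

/-- The two-set partition `{A, X \ A}`. -/
def pairPart (A : Set X) : Fin 2 → Set X := ![A, Aᶜ]

/-- The dimension set `Dims_μ(X,T) = {D̄_μ(T,{A,Aᶜ}) : A ∈ 𝔅, 0 < μ(A) < 1}`. -/
def dimsSet (μ : Measure X) (T : X → X) : Set ℝ :=
  {d : ℝ | ∃ A : Set X, MeasurableSet A ∧ 0 < μ A ∧ μ A < 1 ∧
    d = upperEntDimPart μ T (pairPart A)}

/-- The system is null: every sequence entropy (along any increasing sequence of
positive integers, for any finite measurable partition) vanishes. -/
def IsNullSystem (μ : Measure X) (T : X → X) : Prop :=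
  ∀ (k : ℕ) (P : Fin k → Set X), IsPartition P → ∀ s : ℕ → ℕ, IsPosSeq s →
    Filter.atTop.limsup (fun n : ℕ => seqJoinEnt μ T P s n / n) = 0

end EntDim

/-!
Since `e` preserves `μ`, the map `e^m` carries the join of the partitions `e^{-s_i} α`, `i < n`,
onto the join of the `(e⁻¹)^{-(m - s_i)} α`, for `m ≥ s_{n-1}`: an initial segment of `S`, read
backwards, has the same entropy for `e⁻¹` as for `e`. Concatenating such reversed segments, shifted
apart, gives a sequence for `e⁻¹`. If the segment lengths grow geometrically with ratio between `2`
and `4`, the new sequence is again entropy generating. If moreover infinitely many segments end at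
an index `g` with `s_g ^ τ ≤ C g` (such `g` exist for every `τ < D̄(S)`), its upper dimension is at
least `τ`, because the shifts cost only a factor polynomial in the number of segments, that is,
logarithmic in `g`. Hence `D̄_μ(e, α) ≤ D̄_μ(e⁻¹, α)`, and the reverse inequality follows by
symmetry.
-/

namespace Real

open Finset

lemma negMulLog_sum_le {α : Type*} (F : Finset α) {x : α → ℝ} (hx : ∀ i ∈ F, 0 ≤ x i) :
    Real.negMulLog (∑ i ∈ F, x i) ≤ ∑ i ∈ F, Real.negMulLog (x i) := by
  rw [Real.negMulLog, neg_mul, sum_mul, ← sum_neg_distrib]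
  refine sum_le_sum fun i hi => ?_
  rcases (hx i hi).eq_or_lt with h0 | h0
  · simp [← h0]
  · have := Real.log_le_log h0 (single_le_sum hx hi)
    rw [Real.negMulLog]
    nlinarith

lemma sum_negMulLog_le_log_card {α : Type*} [Fintype α] {p : α → ℝ} (h0 : ∀ a, 0 ≤ p a)
    (h1 : ∑ a, p a = 1) : ∑ a, Real.negMulLog (p a) ≤ Real.log (Fintype.card α) := by
  have hn : (0 : ℝ) < Fintype.card α := by
    obtain ⟨a, -⟩ := exists_ne_zero_of_sum_ne_zero (h1.trans_ne one_ne_zero)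
    exact_mod_cast Fintype.card_pos_iff.mpr ⟨a⟩
  have hJ := Real.concaveOn_negMulLog.le_map_sum (t := univ) (w := fun _ => (Fintype.card α : ℝ)⁻¹)
    (p := p) (fun _ _ => by positivity) (by simp [hn.ne']) (fun a _ => h0 a)
  simp only [smul_eq_mul, ← mul_sum, h1, mul_one] at hJ
  rwa [Real.negMulLog, Real.log_inv, neg_mul_neg, inv_mul_le_iff₀ hn, ← mul_assoc,
    mul_inv_cancel₀ hn.ne', one_mul] at hJ

end Real

namespace EntDim

open Finset

section Join

variable {X : Type*} {T : X → X} {ι : Type*} {P : ι → Set X}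

variable (T P) in
def joinAtom (f : ℕ → ℕ) (F : Finset ℕ) (ω : F → ι) : Set X :=
  ⋂ i : F, T^[f i] ⁻¹' P (ω i)

lemma mem_joinAtom {f : ℕ → ℕ} {F : Finset ℕ} {ω : F → ι} {x : X} :
    x ∈ joinAtom T P f F ω ↔ ∀ i : F, T^[f i] x ∈ P (ω i) :=
  Set.mem_iInter

variable [MeasurableSpace X] {μ : Measure X}

lemma measurableSet_joinAtom (hT : Measurable T) (hP : ∀ i, MeasurableSet (P i)) (f : ℕ → ℕ)
    (F : Finset ℕ) (ω : F → ι) : MeasurableSet (joinAtom T P f F ω) :=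
  .iInter fun _ => hT.iterate _ (hP _)

variable [Fintype ι]

lemma IsPartition.exists_mem (hP : IsPartition P) (x : X) : ∃ i, x ∈ P i :=
  Set.mem_iUnion.mp (hP.2.2 ▸ Set.mem_univ x)

lemma IsPartition.eq_of_mem (hP : IsPartition P) {i j : ι} {x : X} (hi : x ∈ P i)
    (hj : x ∈ P j) : i = j :=
  by_contra fun hne => Set.disjoint_left.mp (hP.2.1 hne) hi hj

lemma finJoinEnt_eq_sum (f : ℕ → ℕ) (F : Finset ℕ) :
    finJoinEnt μ T P f F = ∑ ω, Real.negMulLog (μ.real (joinAtom T P f F ω)) := rfl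

lemma exists_mem_joinAtom (hP : IsPartition P) (f : ℕ → ℕ) (F : Finset ℕ) (x : X) :
    ∃ ω, x ∈ joinAtom T P f F ω := by
  choose ω hω using fun i : F => hP.exists_mem (T^[f i] x)
  exact ⟨ω, mem_joinAtom.mpr hω⟩

lemma pairwise_disjoint_joinAtom (hP : IsPartition P) (f : ℕ → ℕ) (F : Finset ℕ) :
    Pairwise (Function.onFun Disjoint (joinAtom T P f F)) := by
  intro ω ω' hne
  obtain ⟨i, hi⟩ := Function.ne_iff.mp hne
  exact Set.disjoint_left.mpr fun x hx hx' =>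
    hi (hP.eq_of_mem (mem_joinAtom.mp hx i) (mem_joinAtom.mp hx' i))

lemma sum_measureReal_joinAtom [IsProbabilityMeasure μ] (hT : Measurable T)
    (hP : IsPartition P) (f : ℕ → ℕ) (F : Finset ℕ) :
    ∑ ω, μ.real (joinAtom T P f F ω) = 1 := by
  rw [← measureReal_iUnion_fintype (pairwise_disjoint_joinAtom hP f F)
    (measurableSet_joinAtom hT hP.1 f F), Set.iUnion_eq_univ_iff.mpr (exists_mem_joinAtom hP f F),
    probReal_univ]

lemma finJoinEnt_nonneg [IsProbabilityMeasure μ] (f : ℕ → ℕ) (F : Finset ℕ) :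
    0 ≤ finJoinEnt μ T P f F :=
  sum_nonneg fun _ _ => Real.negMulLog_nonneg measureReal_nonneg measureReal_le_one

lemma finJoinEnt_le_card_mul_log [IsProbabilityMeasure μ] (hT : Measurable T)
    (hP : IsPartition P) (f : ℕ → ℕ) (F : Finset ℕ) :
    finJoinEnt μ T P f F ≤ #F * Real.log (Fintype.card ι) := by
  refine (Real.sum_negMulLog_le_log_card (fun _ => measureReal_nonneg)
    (sum_measureReal_joinAtom hT hP f F)).trans_eq ?_
  simp [Real.log_pow]

/-- Entropy increases under refinement: the join over the times `f '' F` is coarser than the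
one over the times `g '' G`. -/
lemma finJoinEnt_mono [IsFiniteMeasure μ] (hT : Measurable T) (hP : IsPartition P)
    {f g : ℕ → ℕ} {F G : Finset ℕ} (hFG : F.image f ⊆ G.image g) :
    finJoinEnt μ T P f F ≤ finJoinEnt μ T P g G := by
  classical
  have hφ : ∀ i : F, ∃ j : G, g j = f i := fun i => by
    obtain ⟨j, hj, hji⟩ := mem_image.mp (hFG (mem_image_of_mem f i.2))
    exact ⟨⟨j, hj⟩, hji⟩
  choose φ hφ using hφ
  let ρ : (G → ι) → (F → ι) := fun ω i => ω (φ i)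
  have hatom : ∀ η, joinAtom T P f F η = ⋃ ω ∈ univ.filter (ρ · = η), joinAtom T P g G ω := by
    intro η
    ext x
    simp only [Set.mem_iUnion, mem_filter, Finset.mem_univ, true_and, exists_prop]
    constructor
    · intro hx
      obtain ⟨ω, hω⟩ := exists_mem_joinAtom hP g G x
      refine ⟨ω, funext fun i => hP.eq_of_mem ?_ (mem_joinAtom.mp hx i), hω⟩
      simpa [hφ i] using mem_joinAtom.mp hω (φ i)
    · rintro ⟨ω, rfl, hω⟩
      exact mem_joinAtom.mpr fun i => by simpa [hφ i] using mem_joinAtom.mp hω (φ i)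
  rw [finJoinEnt_eq_sum, finJoinEnt_eq_sum]
  calc ∑ η, Real.negMulLog (μ.real (joinAtom T P f F η))
      = ∑ η, Real.negMulLog (∑ ω with ρ ω = η, μ.real (joinAtom T P g G ω)) := by
        refine sum_congr rfl fun η _ => ?_
        rw [hatom, measureReal_biUnion_finset
          (fun ω _ ω' _ hne => pairwise_disjoint_joinAtom hP g G hne)
          (fun ω _ => measurableSet_joinAtom hT hP.1 g G ω)]
    _ ≤ ∑ η, ∑ ω with ρ ω = η, Real.negMulLog (μ.real (joinAtom T P g G ω)) :=
        sum_le_sum fun η _ => Real.negMulLog_sum_le _ fun _ _ => measureReal_nonneg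
    _ = ∑ ω, Real.negMulLog (μ.real (joinAtom T P g G ω)) := sum_fiberwise _ _ _

/-- Reading the times backwards from `m` turns a join for `e` into a join for `e⁻¹`:
the two partitions correspond under `e^m`, which preserves `μ`. -/
lemma finJoinEnt_symm {e : X ≃ᵐ X} (he : MeasurePreserving e μ μ) (hP : ∀ i, MeasurableSet (P i))
    {f : ℕ → ℕ} {m : ℕ} {F : Finset ℕ} (hf : ∀ i ∈ F, f i ≤ m) :
    finJoinEnt μ e P f F = finJoinEnt μ e.symm P (fun i => m - f i) F := by
  rw [finJoinEnt_eq_sum, finJoinEnt_eq_sum]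
  refine sum_congr rfl fun ω _ => congrArg _ ?_
  have hatom : joinAtom e P f F ω = e^[m] ⁻¹' joinAtom e.symm P (fun i => m - f i) F ω := by
    ext x
    simp only [mem_joinAtom, Set.mem_preimage]
    refine forall_congr' fun i => ?_
    rw [← Nat.sub_add_cancel (hf i i.2), Function.iterate_add_apply, Nat.add_sub_cancel,
      (Function.LeftInverse.iterate e.symm_apply_apply _) _]
  rw [hatom, (he.iterate m).measureReal_preimage
    (measurableSet_joinAtom e.symm.measurable hP _ F ω).nullMeasurableSet]

end Join

section EntGen

variable {X : Type*} [MeasurableSpace X] {μ : Measure X} [IsProbabilityMeasure μ] {T : X → X}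
  {ι : Type*} [Fintype ι] {P : ι → Set X} {s : ℕ → ℕ}

lemma IsEntGenSeq.exists_eventually_le (hs : IsEntGenSeq μ T P s) :
    ∃ c > 0, ∀ᶠ n in atTop, c * n ≤ seqJoinEnt μ T P s n := by
  obtain ⟨c, hc0, hc⟩ := exists_between hs.2
  have hbdd : IsBoundedUnder (· ≥ ·) atTop fun n : ℕ => seqJoinEnt μ T P s n / n :=
    isBoundedUnder_of ⟨0, fun n => div_nonneg (finJoinEnt_nonneg _ _) n.cast_nonneg⟩
  refine ⟨c, hc0, ?_⟩
  filter_upwards [eventually_lt_of_lt_liminf hc hbdd, eventually_gt_atTop 0] with n hn hn0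
  exact ((lt_div_iff₀ (by exact_mod_cast hn0)).mp hn).le

lemma isEntGenSeq_of_eventually_le (hT : Measurable T) (hP : IsPartition P) (hs : IsPosSeq s)
    {c : ℝ} (hc : 0 < c) (h : ∀ᶠ n in atTop, c * n ≤ seqJoinEnt μ T P s n) :
    IsEntGenSeq μ T P s := by
  have hbdd : IsBoundedUnder (· ≤ ·) atTop fun n : ℕ => seqJoinEnt μ T P s n / n := by
    refine isBoundedUnder_of ⟨Real.log (Fintype.card ι), fun n => ?_⟩
    rcases n.eq_zero_or_pos with rfl | hn
    · simpa using Real.log_natCast_nonneg _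
    · rw [div_le_iff₀ (by exact_mod_cast hn), mul_comm]
      simpa [seqJoinEnt] using finJoinEnt_le_card_mul_log (μ := μ) hT hP s (range n)
  refine ⟨hs, hc.trans_le (le_liminf_of_le hbdd.isCoboundedUnder_ge ?_)⟩
  filter_upwards [h, eventually_gt_atTop 0] with n hn hn0
  rwa [le_div_iff₀ (by exact_mod_cast hn0)]

end EntGen

section Blocks

variable (t : ℕ → ℕ)

def blockStart (k : ℕ) : ℕ := ∑ j ∈ range k, (t j + 1)

def blockIdx (p : ℕ) : ℕ := Nat.findGreatest (fun k => blockStart t k ≤ p) p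

/-- Block `k` of `revConcat t s` has length `t k + 1` and lists `m - s j` for `j = t k, …, 0`,
where `m = blockStart (s ∘ t) k + 1 + s (t k)`: the values of the block lie in the window
`(blockStart (s ∘ t) k, blockStart (s ∘ t) (k + 1)]`, disjoint from the other blocks. -/
def revConcat (s : ℕ → ℕ) (p : ℕ) : ℕ :=
  blockStart (s ∘ t) (blockIdx t p) + 1 + s (t (blockIdx t p)) -
    s (t (blockIdx t p) - (p - blockStart t (blockIdx t p)))

variable {t}

lemma blockStart_succ (k : ℕ) : blockStart t (k + 1) = blockStart t k + t k + 1 := by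
  rw [blockStart, sum_range_succ, ← add_assoc]
  rfl

lemma blockStart_strictMono : StrictMono (blockStart t) :=
  strictMono_nat_of_lt_succ fun k => by rw [blockStart_succ]; omega

lemma exists_eq_blockStart_add (p : ℕ) : ∃ k, ∃ i ≤ t k, p = blockStart t k + i := by
  induction p with
  | zero => exact ⟨0, 0, Nat.zero_le _, rfl⟩
  | succ p ih =>
    obtain ⟨k, i, hi, rfl⟩ := ih
    rcases hi.lt_or_eq with hi | rfl
    · exact ⟨k, i + 1, hi, rfl⟩
    · exact ⟨k + 1, 0, Nat.zero_le _, by rw [blockStart_succ]⟩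

lemma blockIdx_blockStart_add {k i : ℕ} (hi : i ≤ t k) : blockIdx t (blockStart t k + i) = k := by
  refine Nat.findGreatest_eq_iff.mpr
    ⟨(blockStart_strictMono (t := t)).le_apply.trans (le_add_right le_rfl),
      fun _ => le_add_right le_rfl, fun n hkn _ => ?_⟩
  have := (blockStart_strictMono (t := t)).monotone (Nat.succ_le_of_lt hkn)
  rw [blockStart_succ] at this
  omega

variable {s : ℕ → ℕ}

lemma revConcat_blockStart_add {k i : ℕ} (hi : i ≤ t k) :
    revConcat t s (blockStart t k + i) = blockStart (s ∘ t) k + 1 + s (t k) - s (t k - i) := by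
  rw [revConcat, blockIdx_blockStart_add hi, Nat.add_sub_cancel_left]

lemma revConcat_strictMono (hs : StrictMono s) : StrictMono (revConcat t s) := by
  refine strictMono_nat_of_lt_succ fun p => ?_
  obtain ⟨k, i, hi, rfl⟩ := exists_eq_blockStart_add (t := t) p
  have hle := hs.monotone (Nat.sub_le (t k) i)
  rcases hi.lt_or_eq with hi | rfl
  · rw [add_assoc, revConcat_blockStart_add (show i + 1 ≤ t k from hi),
      revConcat_blockStart_add hi.le]
    have := hs (show t k - (i + 1) < t k - i by omega)
    omega
  · rw [revConcat_blockStart_add le_rfl, ← blockStart_succ, ← add_zero (blockStart t (k + 1)),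
      revConcat_blockStart_add (Nat.zero_le _), blockStart_succ (t := s ∘ t)]
    simp only [Function.comp_apply, Nat.sub_zero]
    omega

lemma isPosSeq_revConcat (hs : StrictMono s) : IsPosSeq (revConcat t s) := by
  have h0 := revConcat_blockStart_add (s := s) (Nat.zero_le (t 0))
  simp only [blockStart, range_zero, sum_empty, zero_add, Nat.sub_zero, Nat.add_sub_cancel] at h0
  exact ⟨revConcat_strictMono hs, h0 ▸ Nat.one_pos⟩

lemma revConcat_blockEnd_le (hs : IsPosSeq s) (ht : Monotone t) (k : ℕ) :
    revConcat t s (blockStart t k + t k) ≤ 2 * (k + 1) * s (t k) := by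
  have hoff : blockStart (s ∘ t) k ≤ k * (s (t k) + 1) := by
    simpa [blockStart] using sum_le_card_nsmul (range k) (fun j => s (t j) + 1) _
      fun j hj => by simpa using hs.1.monotone (ht (mem_range.mp hj).le)
  have hs1 : 1 ≤ s (t k) := hs.2.trans_le (hs.1.monotone (Nat.zero_le _))
  rw [revConcat_blockStart_add le_rfl]
  calc _ ≤ k * (s (t k) + 1) + 1 + s (t k) := by omega
    _ = (k + 1) * (s (t k) + 1) := by ring
    _ ≤ (k + 1) * (2 * s (t k)) := by gcongr; omega
    _ = 2 * (k + 1) * s (t k) := by ring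

section Doubling

variable (ht : ∀ k, 2 * (t k + 1) ≤ t (k + 1) + 1)
include ht

lemma monotone_of_doubling : Monotone t :=
  monotone_nat_of_le_succ fun k => by have := ht k; omega

lemma two_pow_le_of_doubling (k : ℕ) : 2 ^ k ≤ t k + 1 := by
  induction k with
  | zero => simp
  | succ k ih => have := ht k; rw [pow_succ]; omega

lemma blockStart_succ_le_of_doubling (k : ℕ) : blockStart t (k + 1) ≤ 2 * (t k + 1) := by
  induction k with
  | zero => simp [blockStart]
  | succ k ih => have := ht k; rw [blockStart_succ]; omega

end Doubling

end Blocks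

section BlockTop

variable {G : Set ℕ}

open Classical in
def blockTop (G : Set ℕ) : ℕ → ℕ
  | 0 => 0
  | k + 1 =>
    if h : ∃ g ∈ G, 2 * (blockTop G k + 1) ≤ g + 1 ∧ g + 1 ≤ 4 * (blockTop G k + 1) then
      h.choose
    else 2 * blockTop G k + 1

lemma blockTop_succ_bounds (k : ℕ) :
    2 * (blockTop G k + 1) ≤ blockTop G (k + 1) + 1 ∧
      blockTop G (k + 1) + 1 ≤ 4 * (blockTop G k + 1) := by
  rw [blockTop]
  split_ifs with h
  · exact h.choose_spec.2
  · omega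

lemma exists_blockTop_mem (hG : ∀ K, ∃ g ≥ K, g ∈ G) (K : ℕ) : ∃ k ≥ K, blockTop G k ∈ G := by
  by_contra! hK
  obtain ⟨g, hgK, hg⟩ := hG (2 * (blockTop G K + 1))
  -- without a hit, the lengths just double and stay below `g + 1` forever
  have hbelow : ∀ j, 2 * (blockTop G (K + j) + 1) ≤ g + 1 := by
    intro j
    induction j with
    | zero => rw [add_zero]; omega
    | succ j ih =>
      by_cases h : ∃ g ∈ G, 2 * (blockTop G (K + j) + 1) ≤ g + 1 ∧
          g + 1 ≤ 4 * (blockTop G (K + j) + 1)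
      · refine absurd ?_ (hK (K + j + 1) (by omega))
        rw [blockTop, dif_pos h]
        exact h.choose_spec.1
      · have hle := not_le.mp fun hle => h ⟨g, hg, ih, hle⟩
        rw [← add_assoc, blockTop, dif_neg h]
        omega
  have := two_pow_le_of_doubling (fun k => (blockTop_succ_bounds (G := G) k).1) (K + g)
  have := Nat.lt_two_pow_self (n := K + g)
  have := hbelow g
  omega

end BlockTop

lemma eventually_mul_rpow_le_pow (a D : ℝ) {r : ℝ} (hr : 1 < r) :
    ∀ᶠ k : ℕ in atTop, D * ((k : ℝ) + 1) ^ a ≤ r ^ k := by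
  have hr0 : 0 < r := one_pos.trans hr
  have hbound := ((isLittleO_rpow_exp_pos_mul_atTop a (Real.log_pos hr)).comp_tendsto
    (tendsto_atTop_add_const_right _ 1 tendsto_natCast_atTop_atTop)).bound
    (c := (r * (|D| + 1))⁻¹) (by positivity)
  filter_upwards [hbound] with k hk
  have hk1 : (0 : ℝ) ≤ ((k : ℝ) + 1) ^ a := by positivity
  have hexp : Real.exp (Real.log r * ((k : ℝ) + 1)) = r ^ k * r := by
    rw [← Real.rpow_def_of_pos hr0, ← Nat.cast_add_one, Real.rpow_natCast, pow_succ]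
  simp only [Function.comp_apply, Real.norm_eq_abs, abs_of_nonneg hk1, hexp,
    abs_of_pos (by positivity : 0 < r ^ k * r)] at hk
  calc D * ((k : ℝ) + 1) ^ a ≤ (|D| + 1) * ((k : ℝ) + 1) ^ a := by
        gcongr; linarith [le_abs_self D]
    _ ≤ (|D| + 1) * ((r * (|D| + 1))⁻¹ * (r ^ k * r)) := by gcongr
    _ = r ^ k := by field_simp

/-- A factor `2 (k + 1)`, polynomial in `k`, is absorbed by the gap between the exponents
`τ' < τ` as soon as `x ≥ 2 ^ k`. -/
lemma eventually_rpow_le_of_rpow_le {τ τ' C : ℝ} (hτ' : 0 ≤ τ') (hlt : τ' < τ) (hC : 0 < C) :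
    ∀ᶠ k : ℕ in atTop, ∀ x y : ℝ, 2 ^ k ≤ x → 0 ≤ y → y ^ τ ≤ C * x →
      (2 * (k + 1) * y) ^ τ' ≤ x := by
  have hτ : 0 < τ := hτ'.trans_lt hlt
  set θ := τ' / τ with hθ
  have hθ1 : θ < 1 := (div_lt_one hτ).mpr hlt
  have hθ0 : 0 ≤ θ := div_nonneg hτ' hτ.le
  filter_upwards [eventually_mul_rpow_le_pow τ' (2 ^ τ' * C ^ θ)
    (Real.one_lt_rpow one_lt_two (by linarith : 0 < 1 - θ))] with k hk x y hx hy hyx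
  have hx0 : 0 < x := (by positivity : (0 : ℝ) < 2 ^ k).trans_le hx
  calc (2 * (k + 1) * y) ^ τ' = 2 ^ τ' * ((k : ℝ) + 1) ^ τ' * (y ^ τ) ^ θ := by
        rw [Real.mul_rpow (by positivity) hy, Real.mul_rpow zero_le_two (by positivity),
          ← Real.rpow_mul hy, hθ, mul_div_cancel₀ _ hτ.ne']
    _ ≤ 2 ^ τ' * ((k : ℝ) + 1) ^ τ' * (C * x) ^ θ := by gcongr
    _ = 2 ^ τ' * C ^ θ * ((k : ℝ) + 1) ^ τ' * x ^ θ := by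
        rw [Real.mul_rpow hC.le hx0.le]; ring
    _ ≤ ((2 : ℝ) ^ (1 - θ)) ^ k * x ^ θ := by gcongr
    _ ≤ x ^ (1 - θ) * x ^ θ := by
        gcongr
        rw [← Real.rpow_natCast, ← Real.rpow_mul zero_le_two, mul_comm, Real.rpow_mul zero_le_two,
          Real.rpow_natCast]
        exact Real.rpow_le_rpow (by positivity) hx (by linarith)
    _ = x := by rw [← Real.rpow_add hx0]; simp

section Dimension

variable {s : ℕ → ℕ} {τ : ℝ}

lemma dimTerm_eq_ofReal {m : ℕ} (hm : 0 < m) (n : ℕ) :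
    ((n : ℝ≥0∞) + 1) / (m : ℝ≥0∞) ^ τ = ENNReal.ofReal ((n + 1) / (m : ℝ) ^ τ) := by
  have hm' : (0 : ℝ) < m := by exact_mod_cast hm
  rw [ENNReal.ofReal_div_of_pos (Real.rpow_pos_of_pos hm' τ), ← ENNReal.ofReal_rpow_of_pos hm',
    ENNReal.ofReal_natCast, ENNReal.ofReal_add n.cast_nonneg zero_le_one, ENNReal.ofReal_natCast,
    ENNReal.ofReal_one]

lemma IsPosSeq.pos (hs : IsPosSeq s) (n : ℕ) : 0 < s n :=
  hs.2.trans_le (hs.1.monotone (Nat.zero_le n))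

lemma dimExprSup_two_eq_zero (hs : IsPosSeq s) : dimExprSup s 2 = 0 := by
  refine (tendsto_of_tendsto_of_tendsto_of_le_of_le tendsto_const_nhds
    (ENNReal.tendsto_inv_nat_nhds_zero.comp (tendsto_add_atTop_nat 1)) (fun _ => zero_le)
    fun n => ?_).limsup_eq
  have hn : n + 1 ≤ s n := (Nat.add_le_add_left hs.2 n).trans (hs.1.add_le_nat n 0)
  rw [Function.comp_apply, Nat.cast_add_one, ENNReal.rpow_two]
  calc ((n : ℝ≥0∞) + 1) / (s n : ℝ≥0∞) ^ 2 ≤ ((n : ℝ≥0∞) + 1) / ((n : ℝ≥0∞) + 1) ^ 2 :=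
        ENNReal.div_le_div_left (by gcongr; exact_mod_cast hn) _
    _ = ((n : ℝ≥0∞) + 1)⁻¹ := by
        rw [pow_two, ENNReal.div_eq_inv_mul, ENNReal.mul_inv (by simp) (by simp), mul_assoc,
          ENNReal.inv_mul_cancel (by simp) (by simp), mul_one]

lemma upperDim_nonneg (hs : IsPosSeq s) : 0 ≤ upperDim s :=
  le_csInf ⟨2, zero_le_two, dimExprSup_two_eq_zero hs⟩ fun _ h => h.1

lemma upperDim_le_two (hs : IsPosSeq s) : upperDim s ≤ 2 :=
  csInf_le ⟨0, fun _ h => h.1⟩ ⟨zero_le_two, dimExprSup_two_eq_zero hs⟩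

lemma dimExprSup_ne_zero_of_lt_upperDim (hτ : 0 ≤ τ) (h : τ < upperDim s) :
    dimExprSup s τ ≠ 0 :=
  fun h0 => h.not_ge (csInf_le ⟨0, fun _ h => h.1⟩ ⟨hτ, h0⟩)

lemma le_upperDim (hs : IsPosSeq s) (h : ∀ τ' ∈ Ico 0 τ, dimExprSup s τ' ≠ 0) :
    τ ≤ upperDim s :=
  le_csInf ⟨2, zero_le_two, dimExprSup_two_eq_zero hs⟩
    fun τ' hτ' => not_lt.mp fun hlt => h τ' ⟨hτ'.1, hlt⟩ hτ'.2

lemma exists_frequently_rpow_le (hs : IsPosSeq s) (h : dimExprSup s τ ≠ 0) :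
    ∃ C > 0, ∃ᶠ n in atTop, (s n : ℝ) ^ τ ≤ C * (n + 1) := by
  obtain ⟨r, hr0, hr⟩ := ENNReal.lt_iff_exists_nnreal_btwn.mp (pos_iff_ne_zero.mpr h)
  replace hr0 : (0 : ℝ) < r := NNReal.coe_pos.mpr (ENNReal.coe_pos.mp hr0)
  refine ⟨(r : ℝ)⁻¹, inv_pos.mpr hr0,
    (frequently_lt_of_lt_limsup (by isBoundedDefault) hr).mono fun n hn => ?_⟩
  rw [dimTerm_eq_ofReal (hs.pos n), ← ENNReal.ofReal_coe_nnreal] at hn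
  have hn := (ENNReal.ofReal_lt_ofReal_iff_of_nonneg r.2).mp hn
  rw [lt_div_iff₀ (by have := hs.pos n; positivity)] at hn
  rw [inv_mul_eq_div, le_div_iff₀ hr0, mul_comm]
  exact hn.le

lemma dimExprSup_ne_zero_of_frequently (hs : IsPosSeq s)
    (h : ∃ᶠ n in atTop, (s n : ℝ) ^ τ ≤ n + 1) : dimExprSup s τ ≠ 0 := by
  refine (zero_lt_one.trans_le (le_limsup_of_frequently_le' (h.mono fun n hn => ?_))).ne'
  rw [dimTerm_eq_ofReal (hs.pos n), ENNReal.one_le_ofReal,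
    one_le_div (by have := hs.pos n; positivity)]
  exact hn

lemma le_upperDim_revConcat {t : ℕ → ℕ} (hs : IsPosSeq s)
    (ht : ∀ k, 2 * (t k + 1) ≤ t (k + 1) + 1) {C : ℝ} (hC : 0 < C)
    (hgood : ∀ K, ∃ k ≥ K, (s (t k) : ℝ) ^ τ ≤ C * (t k + 1)) :
    τ ≤ upperDim (revConcat t s) := by
  refine le_upperDim (isPosSeq_revConcat hs.1) fun τ' ⟨hτ', hlt⟩ =>
    dimExprSup_ne_zero_of_frequently (isPosSeq_revConcat hs.1) (frequently_atTop.mpr fun K => ?_)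
  obtain ⟨k₀, hk₀⟩ := eventually_atTop.mp (eventually_rpow_le_of_rpow_le hτ' hlt hC)
  obtain ⟨k, hk, hk_good⟩ := hgood (max K k₀)
  -- the last position of block `k`
  refine ⟨blockStart t k + t k, ?_, ?_⟩
  · have := (blockStart_strictMono (t := t)).le_apply (x := k)
    omega
  calc (revConcat t s (blockStart t k + t k) : ℝ) ^ τ' ≤ (2 * (k + 1) * s (t k) : ℝ) ^ τ' := by
        gcongr
        exact_mod_cast revConcat_blockEnd_le hs (monotone_of_doubling ht) k
    _ ≤ t k + 1 := hk₀ k (le_of_max_le_right hk) _ _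
        (by exact_mod_cast two_pow_le_of_doubling ht k) (Nat.cast_nonneg _) hk_good
    _ ≤ ((blockStart t k + t k : ℕ) : ℝ) + 1 := by norm_cast; omega

end Dimension

section Entropy

variable {X : Type*} [MeasurableSpace X] {μ : Measure X} [IsProbabilityMeasure μ]
  {ι : Type*} [Fintype ι] {P : ι → Set X} {e : X ≃ᵐ X} {s t : ℕ → ℕ}

lemma seqJoinEnt_le_seqJoinEnt_revConcat (he : MeasurePreserving e μ μ) (hP : IsPartition P)
    (hs : StrictMono s) {k N : ℕ} (hN : blockStart t (k + 1) ≤ N) :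
    seqJoinEnt μ e P s (t k + 1) ≤ seqJoinEnt μ e.symm P (revConcat t s) N := by
  set m := blockStart (s ∘ t) k + 1 + s (t k)
  rw [seqJoinEnt, seqJoinEnt, finJoinEnt_symm he hP.1 (m := m) fun j hj =>
    (hs.monotone (Nat.lt_succ_iff.mp (mem_range.mp hj))).trans (Nat.le_add_left _ _)]
  refine finJoinEnt_mono e.symm.measurable hP fun x hx => ?_
  obtain ⟨j, hj, rfl⟩ := mem_image.mp hx
  have hj := Nat.lt_succ_iff.mp (mem_range.mp hj)
  rw [blockStart_succ] at hN
  refine mem_image.mpr ⟨blockStart t k + (t k - j), mem_range.mpr (by omega), ?_⟩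
  rw [revConcat_blockStart_add (Nat.sub_le _ _), Nat.sub_sub_self hj]

lemma isEntGenSeq_symm_revConcat (he : MeasurePreserving e μ μ) (hP : IsPartition P)
    (hs : IsEntGenSeq μ e P s) (ht₂ : ∀ k, 2 * (t k + 1) ≤ t (k + 1) + 1)
    (ht₄ : ∀ k, t (k + 1) + 1 ≤ 4 * (t k + 1)) :
    IsEntGenSeq μ e.symm P (revConcat t s) := by
  obtain ⟨c, hc, hev⟩ := hs.exists_eventually_le
  obtain ⟨n₀, hn₀⟩ := eventually_atTop.mp hev
  refine isEntGenSeq_of_eventually_le e.symm.measurable hP (isPosSeq_revConcat hs.1.1)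
    (c := c / 8) (by positivity) ?_
  filter_upwards [eventually_ge_atTop (blockStart t (n₀ + 1))] with N hN
  obtain ⟨k, i, hi, rfl⟩ := exists_eq_blockStart_add (t := t) N
  -- `N` lies in block `k + 1`; block `k` is complete and carries a fixed fraction of `N`
  obtain ⟨k, rfl⟩ : ∃ k', k = k' + 1 := ⟨k - 1, by
    have := (blockStart_strictMono (t := t)).lt_iff_lt.mp
      (hN.trans_lt (by rw [blockStart_succ]; omega) : blockStart t (n₀ + 1) < blockStart t (k + 1))
    omega⟩
  have hk : n₀ ≤ t k + 1 := by
    have := (blockStart_strictMono (t := t)).lt_iff_lt.mp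
      (hN.trans_lt (by rw [blockStart_succ (k + 1)]; omega) :
        blockStart t (n₀ + 1) < blockStart t (k + 2))
    have := two_pow_le_of_doubling ht₂ k
    have := Nat.lt_two_pow_self (n := k)
    omega
  have hlen : blockStart t (k + 1) + i ≤ 8 * (t k + 1) := by
    have h₂ := blockStart_succ_le_of_doubling ht₂ (k + 1)
    rw [blockStart_succ (k + 1)] at h₂
    have := ht₄ k
    omega
  calc c / 8 * ((blockStart t (k + 1) + i : ℕ) : ℝ) ≤ c * (t k + 1 : ℕ) := by
        rw [div_mul_eq_mul_div, div_le_iff₀ (by norm_num), mul_assoc]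
        gcongr
        exact_mod_cast (by omega : blockStart t (k + 1) + i ≤ (t k + 1) * 8)
    _ ≤ seqJoinEnt μ e P s (t k + 1) := hn₀ _ hk
    _ ≤ _ := seqJoinEnt_le_seqJoinEnt_revConcat he hP hs.1.1 (Nat.le_add_right _ _)

lemma exists_isEntGenSeq_symm_le_upperDim (he : MeasurePreserving e μ μ) (hP : IsPartition P)
    (hs : IsEntGenSeq μ e P s) {τ : ℝ} (hτ : 0 ≤ τ) (hlt : τ < upperDim s) :
    ∃ s', IsEntGenSeq μ e.symm P s' ∧ τ ≤ upperDim s' := by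
  obtain ⟨C, hC, hfreq⟩ :=
    exists_frequently_rpow_le hs.1 (dimExprSup_ne_zero_of_lt_upperDim hτ hlt)
  set G := {g : ℕ | (s g : ℝ) ^ τ ≤ C * (g + 1)}
  have hbounds := blockTop_succ_bounds (G := G)
  refine ⟨revConcat (blockTop G) s,
    isEntGenSeq_symm_revConcat he hP hs (fun k => (hbounds k).1) (fun k => (hbounds k).2),
    le_upperDim_revConcat hs.1 (fun k => (hbounds k).1) hC
      (exists_blockTop_mem (frequently_atTop.mp hfreq))⟩

lemma upperEntDimPart_le_symm (he : MeasurePreserving e μ μ) (hP : IsPartition P) :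
    upperEntDimPart μ e P ≤ upperEntDimPart μ e.symm P := by
  have hbdd : BddAbove {d | ∃ s, IsEntGenSeq μ e.symm P s ∧ d = upperDim s} :=
    ⟨2, by rintro _ ⟨s, hs, rfl⟩; exact upperDim_le_two hs.1⟩
  have hnonneg : 0 ≤ upperEntDimPart μ e.symm P :=
    Real.sSup_nonneg fun _ ⟨s, hs, hd⟩ => hd ▸ upperDim_nonneg hs.1
  refine Real.sSup_le (fun _ ⟨s, hs, hd⟩ => hd ▸ le_of_forall_lt_imp_le_of_dense fun τ hτ => ?_)
    hnonneg
  rcases lt_or_ge τ 0 with hτ0 | hτ0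
  · exact hτ0.le.trans hnonneg
  obtain ⟨s', hs', hτs'⟩ := exists_isEntGenSeq_symm_le_upperDim he hP hs hτ0 hτ
  exact hτs'.trans (le_csSup hbdd ⟨s', hs', rfl⟩)

lemma upperEntDimPart_symm (he : MeasurePreserving e μ μ) (hP : IsPartition P) :
    upperEntDimPart μ e P = upperEntDimPart μ e.symm P :=
  (upperEntDimPart_le_symm he hP).antisymm
    (by simpa using upperEntDimPart_le_symm (he.symm e) hP)

end Entropy

/-- For an invertible measure-preserving system,
`D̄_μ(T,α) = D̄_μ(T⁻¹,α)`, and consequently `D̄_μ(X,T) = D̄_μ(X,T⁻¹)`. -/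
theorem upperEntDim_inv {X : Type*} [MeasurableSpace X]
    (μ : Measure X) [IsProbabilityMeasure μ] (e : X ≃ᵐ X) (he : MeasurePreserving ⇑e μ μ)
    {ι : Type*} [Fintype ι] (P : ι → Set X) (hP : IsPartition P) :
    upperEntDimPart μ ⇑e P = upperEntDimPart μ ⇑e.symm P ∧
    upperEntDim μ ⇑e = upperEntDim μ ⇑e.symm :=
  ⟨upperEntDimPart_symm he hP, congrArg sSup <| Set.ext fun _ =>
    exists_congr fun _ => exists_congr fun Q => and_congr_right fun hQ => by
      rw [upperEntDimPart_symm he hQ]⟩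

end EntDim
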